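/- For any graph G and any vertex v of G, st_id(G) ≤ st_id(G − v) + 1. -/

import Mathlib

open SimpleGraph

/-- `S` is an independent dominating set of `G`. -/
def SimpleGraph.IsIndepDomSet {V : Type*} (G : SimpleGraph V) (S : Set V) : Prop :=
  (S.Pairwise fun u v => ¬ G.Adj u v) ∧ ∀ v ∉ S, ∃ u ∈ S, G.Adj v u

/-- The independent domination number `γᵢ(G)`. -/
noncomputable def indepDomNum (V : Type*) [Fintype V] (G : SimpleGraph V) : ℕ :=
  sInf {n | ∃ S : Finset V, G.IsIndepDomSet ↑S ∧ S.card = n}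

/-- The independent domination stability `st_id(G)`: the minimum number of
vertices whose removal changes the independent domination number. -/
noncomputable def idStability (V : Type*) [Fintype V] [DecidableEq V]
    (G : SimpleGraph V) : ℕ :=
  sInf {k | ∃ A : Finset V, A.card = k ∧ A.Nonempty ∧
    indepDomNum _ (G.induce (↑(Aᶜ) : Set V)) ≠ indepDomNum V G}

/-! If deleting `v` changes `γᵢ(G)`, then `st_id(G) ≤ 1`. Otherwise take
a set `A'` of `st_id(G - v)` vertices of `G - v` whose deletion changes `γᵢ(G - v) = γᵢ(G)`: since
`(G - v) - A' ≅ G - (A' ∪ {v})`, deleting the `st_id(G - v) + 1` vertices `A' ∪ {v}` from `G`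
changes `γᵢ(G)`. Such an `A'` exists because deleting every vertex drops `γᵢ` to `0`, and `γᵢ`
vanishes only on the empty graph. -/

namespace SimpleGraph

variable {V W : Type*}

/-- A maximal independent set is dominating. -/
theorem exists_isIndepDomSet [Finite V] (G : SimpleGraph V) :
    ∃ S : Finset V, G.IsIndepDomSet ↑S := by
  classical
  obtain ⟨S, -, hS, hmax⟩ := Finite.exists_le_maximal
    (p := fun S : Finset V => (↑S : Set V).Pairwise fun u w => ¬ G.Adj u w) (a := ∅) (by simp)
  refine ⟨S, hS, fun w hw => ?_⟩
  by_contra! hno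
  have : Std.Symm (fun u w : V => ¬ G.Adj u w) := ⟨fun _ _ h hadj => h hadj.symm⟩
  have hins : (↑(insert w S) : Set V).Pairwise fun u w => ¬ G.Adj u w := by
    rw [Finset.coe_insert, Set.pairwise_insert_of_symm]
    exact ⟨hS, fun u hu _ => hno u hu⟩
  exact hw (hmax hins (Finset.subset_insert w S) (Finset.mem_insert_self w S))

theorem IsIndepDomSet.image [DecidableEq W] {G : SimpleGraph V} {H : SimpleGraph W}
    (e : G ≃g H) {S : Finset V} (h : G.IsIndepDomSet ↑S) :
    H.IsIndepDomSet ↑(S.image e) := by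
  refine ⟨?_, fun w hw => ?_⟩
  · simp only [Finset.coe_image]
    rintro _ ⟨a, ha, rfl⟩ _ ⟨b, hb, rfl⟩ hne hadj
    exact h.1 ha hb (ne_of_apply_ne e hne) (e.map_adj_iff.mp hadj)
  · have hw' : e.symm w ∉ S := fun hmem => hw (Finset.mem_image.mpr ⟨_, hmem, by simp⟩)
    obtain ⟨u, hu, hadj⟩ := h.2 _ hw'
    exact ⟨e u, Finset.mem_image_of_mem e hu, by simpa using e.map_adj_iff.mpr hadj⟩

theorem exists_card_eq_indepDomNum [Fintype V] (G : SimpleGraph V) :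
    ∃ S : Finset V, G.IsIndepDomSet ↑S ∧ S.card = indepDomNum V G := by
  obtain ⟨S, hS⟩ := exists_isIndepDomSet G
  exact Nat.sInf_mem (s := {n | ∃ S : Finset V, G.IsIndepDomSet ↑S ∧ S.card = n}) ⟨_, S, hS, rfl⟩

theorem indepDomNum_eq_zero_iff [Fintype V] (G : SimpleGraph V) :
    indepDomNum V G = 0 ↔ IsEmpty V := by
  constructor
  · intro h
    obtain ⟨S, hS, hcard⟩ := exists_card_eq_indepDomNum G
    rw [h, Finset.card_eq_zero] at hcard
    subst hcard
    refine ⟨fun w => ?_⟩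
    obtain ⟨u, hu, -⟩ := hS.2 w (by simp)
    simp at hu
  · intro _
    exact Nat.eq_zero_of_le_zero <|
      Nat.sInf_le ⟨∅, ⟨by simp, fun v _ => isEmptyElim v⟩, rfl⟩

theorem Iso.indepDomNum_le [Fintype V] [Fintype W]
    {G : SimpleGraph V} {H : SimpleGraph W} (e : G ≃g H) :
    indepDomNum W H ≤ indepDomNum V G := by
  classical
  obtain ⟨S, hS, hcard⟩ := exists_card_eq_indepDomNum G
  calc indepDomNum W H ≤ (S.image e).card := Nat.sInf_le ⟨_, hS.image e, rfl⟩
    _ = indepDomNum V G := by rw [Finset.card_image_of_injective _ e.injective, hcard]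

theorem Iso.indepDomNum_eq [Fintype V] [Fintype W]
    {G : SimpleGraph V} {H : SimpleGraph W} (e : G ≃g H) :
    indepDomNum V G = indepDomNum W H :=
  e.symm.indepDomNum_le.antisymm e.indepDomNum_le

theorem indepDomNum_induce_induce (G : SimpleGraph V) {s : Set V} (t : Set s)
    {u : Set V} [Fintype t] [Fintype u] (h : Subtype.val '' t = u) :
    indepDomNum t ((G.induce s).induce t) = indepDomNum u (G.induce u) :=
  Iso.indepDomNum_eq
    ⟨(Equiv.Set.image _ t Subtype.val_injective).trans (Equiv.setCongr h), Iff.rfl⟩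

section idStability

variable [Fintype V] [DecidableEq V] (G : SimpleGraph V)

theorem idStability_le_card {A : Finset V} (hA : A.Nonempty)
    (hne : indepDomNum _ (G.induce (↑(Aᶜ) : Set V)) ≠ indepDomNum V G) :
    idStability V G ≤ A.card :=
  Nat.sInf_le ⟨A, rfl, hA, hne⟩

theorem exists_card_eq_idStability [Nonempty V] :
    ∃ A : Finset V, A.card = idStability V G ∧ A.Nonempty ∧
      indepDomNum _ (G.induce (↑(Aᶜ) : Set V)) ≠ indepDomNum V G := by
  refine Nat.sInf_mem (s := {k | ∃ A : Finset V, A.card = k ∧ A.Nonempty ∧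
    indepDomNum _ (G.induce (↑(Aᶜ) : Set V)) ≠ indepDomNum V G})
    ⟨_, Finset.univ, rfl, Finset.univ_nonempty, ?_⟩
  have : IsEmpty ↥(↑(Finset.univᶜ : Finset V) : Set V) := by simp
  rw [(indepDomNum_eq_zero_iff _).mpr this, ne_comm, Ne, indepDomNum_eq_zero_iff, not_isEmpty_iff]
  infer_instance

end idStability

end SimpleGraph

/-- For any graph `G` and vertex `v`, `st_id(G) ≤ st_id(G - v) + 1`. -/
theorem stmt13 {V : Type*} [Fintype V] [DecidableEq V] (G : SimpleGraph V)
    (v : V) :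
    idStability V G ≤
      idStability _ (G.induce (↑(({v} : Finset V)ᶜ) : Set V)) + 1 := by
  set s : Set V := ↑(({v} : Finset V)ᶜ)
  obtain hne | hEq := ne_or_eq (indepDomNum _ (G.induce s)) (indepDomNum V G)
  · exact (idStability_le_card G (Finset.singleton_nonempty v) hne).trans le_add_self
  have : Nonempty V := ⟨v⟩
  have : Nonempty s := by
    rw [← not_isEmpty_iff, ← indepDomNum_eq_zero_iff, hEq, indepDomNum_eq_zero_iff,
      not_isEmpty_iff]
    infer_instance
  obtain ⟨A', hcard, -, hA'⟩ := exists_card_eq_idStability (G.induce s)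
  set A := insert v (A'.map (Function.Embedding.subtype _))
  have hvA' : v ∉ A'.map (Function.Embedding.subtype _) := by simp [s]
  have hdel : Subtype.val '' (↑(A'ᶜ) : Set s) = ↑(Aᶜ) := by
    ext x
    by_cases hx : x = v <;> simp [A, s, hx]
  calc idStability V G ≤ A.card := idStability_le_card G (Finset.insert_nonempty _ _) <| by
        rwa [← indepDomNum_induce_induce G _ hdel, ← hEq]
    _ = _ := by rw [Finset.card_insert_of_notMem hvA', Finset.card_map, hcard]
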